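/- Constancy and explicit value of the Hamiltonian along optimal trajectories for the linear model: let γ > 0, m ≥ 1, A = [[−1−γ/2, γ/2],[γ/2, −1−γ/2]], ξ = (1+γ)^{2m−1}, and let z(t) = (c₁·e^{−t} + c₂·e^{(−1−γ)t}, c₁·e^{−t} − c₂·e^{(−1−γ)t}) and λ(t) = (c₃·e^{t} + c₄·e^{(1+γ)t} + c₁·e^{−t} + ξ·c₂·e^{(−1−γ)t}, c₃·e^{t} − c₄·e^{(1+γ)t} + c₁·e^{−t} − ξ·c₂·e^{(−1−γ)t}) with c₁, c₂, c₃, c₄ ∈ ℝ. Then the Hamiltonian H(t) = ‖A^m z(t)‖₂² + λ(t)ᵀ·A·z(t) is constant in t and equals H = −2c₁c₃ − 2(1+γ)c₂c₄. -/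
import Mathlib


open Real Matrix

lemma aux_pow_mulVec (γ : ℝ) (A : Matrix (Fin 2) (Fin 2) ℝ)
    (hA : A = !![-1 - γ / 2, γ / 2; γ / 2, -1 - γ / 2]) (m : ℕ) (a b : ℝ) :
    (A ^ m).mulVec ![a + b, a - b]
      = ![(-1 : ℝ) ^ m * a + (-(1 + γ)) ^ m * b,
          (-1 : ℝ) ^ m * a - (-(1 + γ)) ^ m * b] := by
  induction m with
  | zero => simp [Matrix.mulVec_one]
  | succ n ih =>
      rw [pow_succ', ← Matrix.mulVec_mulVec, ih]
      rw [hA]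
      funext i
      fin_cases i <;>
        simp [Matrix.mulVec, dotProduct, Fin.sum_univ_two, pow_succ] <;> ring

/-- Constancy and explicit value of the Hamiltonian along optimal
trajectories for the linear model: with A = [[−1−γ/2, γ/2],[γ/2, −1−γ/2]],
ξ = (1+γ)^{2m−1}, z the general solution and λ the adjoint solution, the Hamiltonian
H(t) = ‖A^m z(t)‖₂² + λ(t)ᵀ·A·z(t) is constant in t and equals
−2c₁c₃ − 2(1+γ)c₂c₄. -/
theorem stmt16 (γ : ℝ) (hγ : 0 < γ) (m : ℕ) (hm : 1 ≤ m) (c₁ c₂ c₃ c₄ : ℝ)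
    (A : Matrix (Fin 2) (Fin 2) ℝ) (hA : A = !![-1 - γ / 2, γ / 2; γ / 2, -1 - γ / 2])
    (ξ : ℝ) (hξ : ξ = (1 + γ) ^ (2 * m - 1))
    (z lam : ℝ → Fin 2 → ℝ)
    (hz : ∀ t : ℝ, z t = ![c₁ * exp (-t) + c₂ * exp ((-1 - γ) * t),
                           c₁ * exp (-t) - c₂ * exp ((-1 - γ) * t)])
    (hlam : ∀ t : ℝ,
      lam t = ![c₃ * exp t + c₄ * exp ((1 + γ) * t) + c₁ * exp (-t)
                  + ξ * c₂ * exp ((-1 - γ) * t),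
                c₃ * exp t - c₄ * exp ((1 + γ) * t) + c₁ * exp (-t)
                  - ξ * c₂ * exp ((-1 - γ) * t)]) :
    ∀ t : ℝ,
      ((A ^ m).mulVec (z t) 0) ^ 2 + ((A ^ m).mulVec (z t) 1) ^ 2
          + lam t ⬝ᵥ A.mulVec (z t)
        = -2 * c₁ * c₃ - 2 * (1 + γ) * c₂ * c₄ := by
  intro t
  have hAm := aux_pow_mulVec γ A hA m (c₁ * exp (-t)) (c₂ * exp ((-1 - γ) * t))
  have hA1 := aux_pow_mulVec γ A hA 1 (c₁ * exp (-t)) (c₂ * exp ((-1 - γ) * t))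
  rw [pow_one] at hA1
  have h1 : exp (-t) * exp t = 1 := by
    rw [← Real.exp_add]; simp
  have h2 : exp ((-1 - γ) * t) * exp ((1 + γ) * t) = 1 := by
    rw [← Real.exp_add]; ring_nf; simp
  have hp : ((-1 : ℝ) ^ m) ^ 2 = 1 := by
    rw [← pow_mul, mul_comm, pow_mul]; simp
  have hQ : ((-(1 + γ)) ^ m) ^ 2 = (1 + γ) * ξ := by
    rw [← pow_mul, mul_comm m 2]
    have : (-(1 + γ)) ^ (2 * m) = (1 + γ) ^ (2 * m) := by
      rw [neg_pow]; simp [pow_mul]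
    rw [this, hξ]
    have h2m : 2 * m = (2 * m - 1) + 1 := by omega
    conv_lhs => rw [h2m]
    rw [pow_succ]; ring
  rw [hz, hlam, hAm, hA1]
  simp only [Matrix.cons_val_zero, Matrix.cons_val_one, Matrix.head_cons,
    dotProduct, Fin.sum_univ_two]
  linear_combination (2 * c₁ ^ 2 * exp (-t) ^ 2) * hp
    + (2 * c₂ ^ 2 * exp ((-1 - γ) * t) ^ 2) * hQ
    + (-2 * c₁ * c₃) * h1 + (-2 * (1 + γ) * c₂ * c₄) * h2
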